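/- Consider the unified Maxwell field equations of Section 4: given smooth functions s^μ, A_μ, A_{μ,α}, p^{μ,α} on ℝ⁴ satisfying (i) ∂A_μ/∂x^α = A_{μ,α}, (ii) p^{μ,α} = (1/μ₀) g^{μν} g^{αβ} F_{βν} with F_{βν} = A_{ν,β} − A_{β,ν}, and (iii) ∂p^{μ,α}/∂x^μ = −(J^α + γ_μ p^{μ,α}). Then A satisfies the second-order modified Maxwell equation μ₀ J^μ = −g^{να} g^{μσ}(∂F_{σα}/∂x^ν + γ_ν F_{σα}) where now F_{σα} = ∂A_α/∂x^σ − ∂A_σ/∂x^α. -/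

import Mathlib

/-- the unified (Skinner–Rusk) Maxwell field equations imply the
second-order modified Maxwell equation. Given smooth `s, A, Av, p` on `ℝ⁴`
satisfying (i) holonomy `∂A_μ/∂x^α = A_{μ,α}`, (ii) the Legendre constraint
`p^{μ,α} = (1/μ₀) g^{μν} g^{αβ} F_{βν}` with `F_{βν} = A_{ν,β} − A_{β,ν}`, and
(iii) `∂p^{μ,α}/∂x^μ = −(J^α + γ_μ p^{μ,α})`, the potential `A` satisfies
`μ₀ J^μ = −g^{να} g^{μσ}(∂F_{σα}/∂x^ν + γ_ν F_{σα})`, where now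
`F_{σα} = ∂A_α/∂x^σ − ∂A_σ/∂x^α`. -/
theorem unified_maxwell_implies_second_order
    (μ₀ : ℝ) (hμ₀ : μ₀ ≠ 0)
    (g : Matrix (Fin 4) (Fin 4) ℝ) (hgsymm : ∀ i j, g i j = g j i)
    (hgnondeg : IsUnit g.det)
    (s : (Fin 4 → ℝ) → Fin 4 → ℝ) (hs : ∀ μ, ContDiff ℝ (⊤ : ℕ∞) fun x => s x μ)
    (A : (Fin 4 → ℝ) → Fin 4 → ℝ) (hA : ∀ μ, ContDiff ℝ (⊤ : ℕ∞) fun x => A x μ)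
    (Av : (Fin 4 → ℝ) → Fin 4 → Fin 4 → ℝ)
    (hAv : ∀ μ α, ContDiff ℝ (⊤ : ℕ∞) fun x => Av x μ α)
    (p : (Fin 4 → ℝ) → Fin 4 → Fin 4 → ℝ)
    (hpsmooth : ∀ μ α, ContDiff ℝ (⊤ : ℕ∞) fun x => p x μ α)
    (γ J : (Fin 4 → ℝ) → Fin 4 → ℝ)
    (hγ : ∀ μ, ContDiff ℝ (⊤ : ℕ∞) fun x => γ x μ)
    (hJ : ∀ μ, ContDiff ℝ (⊤ : ℕ∞) fun x => J x μ)
    -- (i) holonomy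
    (holonomy : ∀ x μ α, fderiv ℝ (fun z => A z μ) x (Pi.single α 1) = Av x μ α)
    -- (ii) Legendre constraint
    (legendre : ∀ x μ α, p x μ α =
      (1 / μ₀) * ∑ ν, ∑ β, g μ ν * g α β * (Av x ν β - Av x β ν))
    -- (iii) momentum equation
    (momentum : ∀ x α, ∑ μ, fderiv ℝ (fun z => p z μ α) x (Pi.single μ 1)
      = -(J x α + ∑ μ, γ x μ * p x μ α)) :
    ∀ x μ, μ₀ * J x μ =
      -∑ ν, ∑ α, ∑ σ, g ν α * g μ σ *
        (fderiv ℝ (fun z =>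
            fderiv ℝ (fun w => A w α) z (Pi.single σ 1)
              - fderiv ℝ (fun w => A w σ) z (Pi.single α 1)) x (Pi.single ν 1)
          + γ x ν * (fderiv ℝ (fun w => A w α) x (Pi.single σ 1)
              - fderiv ℝ (fun w => A w σ) x (Pi.single α 1))) := by
  intro x μ
  have dAv : ∀ (a b : Fin 4), Differentiable ℝ fun z => Av z a b :=
    fun a b => (hAv a b).differentiable (by simp)
  have hF : ∀ (a b : Fin 4), (fun z =>
      fderiv ℝ (fun w => A w a) z (Pi.single b 1)
        - fderiv ℝ (fun w => A w b) z (Pi.single a 1))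
      = fun z => Av z a b - Av z b a := by
    intro a b; funext z; rw [holonomy, holonomy]
  have hdsub : ∀ (a b : Fin 4), Differentiable ℝ fun z => Av z a b - Av z b a :=
    fun a b => (dAv a b).sub (dAv b a)
  have hfder : ∀ ν : Fin 4, fderiv ℝ (fun z => p z ν μ) x (Pi.single ν 1)
      = (1/μ₀) * ∑ α, ∑ σ, g ν α * g μ σ *
          (fderiv ℝ (fun z => Av z α σ - Av z σ α) x (Pi.single ν 1)) := by
    intro ν
    have hpfun : (fun z => p z ν μ)
        = fun z => (1/μ₀) * ∑ α, ∑ σ, g ν α * g μ σ * (Av z α σ - Av z σ α) :=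
      funext fun z => legendre z ν μ
    have hd2 : ∀ α σ : Fin 4, DifferentiableAt ℝ
        (fun z => g ν α * g μ σ * (Av z α σ - Av z σ α)) x := fun α σ =>
      (((hdsub α σ).const_mul _) x)
    have hd1 : ∀ α : Fin 4, DifferentiableAt ℝ
        (fun z => ∑ σ, g ν α * g μ σ * (Av z α σ - Av z σ α)) x := fun α =>
      DifferentiableAt.fun_sum fun σ _ => hd2 α σ
    rw [hpfun, fderiv_const_mul (DifferentiableAt.fun_sum fun α _ => hd1 α)]
    rw [ContinuousLinearMap.smul_apply, smul_eq_mul]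
    congr 1
    rw [fderiv_fun_sum fun α _ => hd1 α, ContinuousLinearMap.sum_apply]
    refine Finset.sum_congr rfl fun α _ => ?_
    rw [fderiv_fun_sum fun σ _ => hd2 α σ, ContinuousLinearMap.sum_apply]
    refine Finset.sum_congr rfl fun σ _ => ?_
    rw [fderiv_const_mul ((hdsub α σ) x), ContinuousLinearMap.smul_apply,
      smul_eq_mul]
  have main := momentum x μ
  simp only [hfder] at main
  simp only [legendre] at main
  -- rewrite the goal using hF and holonomy
  simp only [hF, holonomy]
  -- split the triple sum
  have split : ∀ ν : Fin 4,
      (∑ α, ∑ σ, g ν α * g μ σ *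
        (fderiv ℝ (fun z => Av z α σ - Av z σ α) x (Pi.single ν 1)
          + γ x ν * (Av x α σ - Av x σ α)))
      = (∑ α, ∑ σ, g ν α * g μ σ *
          fderiv ℝ (fun z => Av z α σ - Av z σ α) x (Pi.single ν 1))
        + γ x ν * ∑ α, ∑ σ, g ν α * g μ σ * (Av x α σ - Av x σ α) := by
    intro ν
    rw [Finset.mul_sum, ← Finset.sum_add_distrib]
    refine Finset.sum_congr rfl fun α _ => ?_
    rw [Finset.mul_sum, ← Finset.sum_add_distrib]
    refine Finset.sum_congr rfl fun σ _ => ?_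
    ring
  simp only [split]
  rw [Finset.sum_add_distrib]
  -- pull 1/μ₀ out of sums in main
  rw [show (∑ ν, (1/μ₀) * ∑ α, ∑ σ, g ν α * g μ σ *
      fderiv ℝ (fun z => Av z α σ - Av z σ α) x (Pi.single ν 1))
      = (1/μ₀) * ∑ ν, ∑ α, ∑ σ, g ν α * g μ σ *
        fderiv ℝ (fun z => Av z α σ - Av z σ α) x (Pi.single ν 1) from
    (Finset.mul_sum _ _ _).symm] at main
  rw [show (∑ ν, γ x ν * ((1/μ₀) * ∑ α, ∑ σ, g ν α * g μ σ * (Av x α σ - Av x σ α)))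
      = (1/μ₀) * ∑ ν, γ x ν * ∑ α, ∑ σ, g ν α * g μ σ * (Av x α σ - Av x σ α) from by
    rw [Finset.mul_sum]; exact Finset.sum_congr rfl fun ν _ => by ring] at main
  field_simp at main
  linarith [main]
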